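/- arXiv:math/0201103 — 3 statements merged into one kernel-verified Lean document; each statement's English description precedes it below -/
import Mathlib

section
/- Let G_c be a compact group acting by algebra automorphisms on a unital ℂ-algebra D, acting locally finitely and completely reducibly, and suppose the invariant subalgebra D^{G_c} equals ℂ·1. Let T : D → ℂ be the unique G_c-equivariant linear projection with T(1)=1. If D is generated as an algebra by a subset X ⊆ D such that T([x, A]) = 0 for all x ∈ X and A ∈ D, then T is a trace: T(AB) = T(BA) for all A, B ∈ D. -/
/-- Let `G_c` be a compact group acting by algebra automorphisms on a unital
ℂ-algebra `D`, acting locally finitely and completely reducibly, with `D^{G_c} = ℂ·1`.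
Let `T : D → ℂ` be the unique `G_c`-equivariant linear projection with `T 1 = 1`.
If `D` is generated as an algebra by a set `X` with `T [x, A] = 0` for all `x ∈ X`, `A ∈ D`,
then `T` is a trace: `T (A*B) = T (B*A)`. -/
theorem equivariant_projection_is_trace
    (G D : Type*) [Group G] [TopologicalSpace G] [CompactSpace G] [IsTopologicalGroup G]
    [Ring D] [Algebra ℂ D]
    (ρ : G →* (D ≃ₐ[ℂ] D))
    -- locally finite action
    (hlf : ∀ d : D, ∃ W : Submodule ℂ D, FiniteDimensional ℂ W ∧ d ∈ W ∧
      ∀ g : G, W.map (ρ g).toLinearMap ≤ W)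
    -- complete reducibility: every invariant subspace has an invariant complement
    (hcr : ∀ U : Submodule ℂ D, (∀ g : G, U.map (ρ g).toLinearMap ≤ U) →
      ∃ U' : Submodule ℂ D, IsCompl U U' ∧ ∀ g : G, U'.map (ρ g).toLinearMap ≤ U')
    -- the invariants are exactly the constants ℂ·1
    (hinv : {d : D | ∀ g : G, ρ g d = d} = Set.range (algebraMap ℂ D))
    -- T is the G_c-equivariant projection onto ℂ·1 with T 1 = 1
    (T : D →ₗ[ℂ] ℂ)
    (hT1 : T 1 = 1)
    (hTequiv : ∀ (g : G) (A : D), T (ρ g A) = T A)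
    (hTproj : ∀ c : ℂ, T (algebraMap ℂ D c) = c)
    -- X generates D as an algebra and T kills commutators with elements of X
    (X : Set D)
    (hgen : Algebra.adjoin ℂ X = ⊤)
    (hX : ∀ x ∈ X, ∀ A : D, T (x * A - A * x) = 0) :
    ∀ A B : D, T (A * B) = T (B * A) := by
  intro A B
  let S : Subalgebra ℂ D :=
    { carrier := {a : D | ∀ b : D, T (a * b) = T (b * a)}
      mul_mem' := by
        intro a b ha hb c
        calc T (a * b * c) = T (a * (b * c)) := by rw [mul_assoc]
          _ = T (b * c * a) := ha _
          _ = T (b * (c * a)) := by rw [mul_assoc]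
          _ = T (c * a * b) := hb _
          _ = T (c * (a * b)) := by rw [mul_assoc]
      add_mem' := by
        intro a b ha hb c
        simp only [add_mul, mul_add, map_add, ha c, hb c]
      algebraMap_mem' := by
        intro c b
        rw [Algebra.commutes] }
  have hXS : X ⊆ S := by
    intro x hx b
    have h := hX x hx b
    rw [map_sub, sub_eq_zero] at h
    exact h
  have htop : (⊤ : Subalgebra ℂ D) ≤ S := hgen ▸ Algebra.adjoin_le hXS
  exact htop (Algebra.mem_top) B
end

section
/- Let W be an associative ℂ-algebra carrying a locally finite, completely reducible action of a compact group S_c by algebra automorphisms, and a Lie algebra homomorphism ξ : s → W whose image consists of S_c-invariant-compatible elements (i.e., the commutators [ξ^x, ·] span the infinitesimal action). Write W = W^{inv} ⊕ X where W^{inv} is the S_c-invariants and X the sum of nontrivial isotypic components, and let M = span{ξ^x A − A ξ^y, A − s·A : x,y ∈ s, s ∈ S_c, A ∈ W}. Then M ∩ W^{inv} is a two-sided ideal of the subalgebra W^{inv}, and the quotient W/M is naturally isomorphic to W^{inv}/(M ∩ W^{inv}) as vector spaces. -/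
attribute [local instance] LieRing.ofAssociativeRing

/-- Let `W` be an associative ℂ-algebra with a locally finite completely
reducible action of a compact group `S_c` by algebra automorphisms, and `ξ : s → W` a Lie
algebra homomorphism compatible with the action in the sense that `S_c`-invariant elements
commute with all `ξ^x` (the commutators `[ξ^x, ·]` implement the infinitesimal action).
Let `M = span{ξ^x A − A ξ^y, A − s·A}` and let `W^inv` be the invariant subalgebra.
Then `M ∩ W^inv` is a two-sided ideal of `W^inv`, and the natural map
`W^inv → W/M` is surjective with kernel `M ∩ W^inv`; i.e. `W/M ≅ W^inv/(M ∩ W^inv)`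
as vector spaces. -/
theorem coinvariants_as_quotient_of_invariants
    (S W s : Type*) [Group S] [TopologicalSpace S] [CompactSpace S] [IsTopologicalGroup S]
    [Ring W] [Algebra ℂ W] [LieRing s] [LieAlgebra ℂ s]
    (ρ : S →* (W ≃ₐ[ℂ] W))
    (hlf : ∀ w : W, ∃ U : Submodule ℂ W, FiniteDimensional ℂ U ∧ w ∈ U ∧
      ∀ g : S, U.map (ρ g).toLinearMap ≤ U)
    (hcr : ∀ U : Submodule ℂ W, (∀ g : S, U.map (ρ g).toLinearMap ≤ U) →
      ∃ U' : Submodule ℂ W, IsCompl U U' ∧ ∀ g : S, U'.map (ρ g).toLinearMap ≤ U')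
    (ξ : s →ₗ⁅ℂ⁆ W)
    (hcompat : ∀ D : W, (∀ g : S, ρ g D = D) → ∀ x : s, ξ x * D = D * ξ x)
    -- the invariants, as a ℂ-submodule (it is a subalgebra since ρ acts by automorphisms)
    (Winv : Submodule ℂ W)
    (hWinv : (Winv : Set W) = {w : W | ∀ g : S, ρ g w = w})
    -- M : the subspace of coinvariant relations
    (M : Submodule ℂ W)
    (hM : M = Submodule.span ℂ
      ({w | ∃ (x y : s) (A : W), w = ξ x * A - A * ξ y} ∪
       {w | ∃ (g : S) (A : W), w = A - ρ g A})) :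
    -- M ∩ W^inv is a two-sided ideal of the subalgebra W^inv
    (∀ D ∈ Winv, ∀ A ∈ M ⊓ Winv, D * A ∈ M ⊓ Winv ∧ A * D ∈ M ⊓ Winv) ∧
    -- W^inv → W/M is surjective with kernel M ∩ W^inv
    Function.Surjective (M.mkQ.comp Winv.subtype) ∧
    LinearMap.ker (M.mkQ.comp Winv.subtype) = Submodule.comap Winv.subtype M := by
  have hmem : ∀ w : W, w ∈ Winv ↔ ∀ g : S, ρ g w = w := by
    intro w
    constructor
    · intro hw; have : w ∈ (Winv : Set W) := hw; rw [hWinv] at this; exact this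
    · intro hw; show w ∈ (Winv : Set W); rw [hWinv]; exact hw
  -- multiplication by invariants preserves M
  have keyL : ∀ D : W, (∀ g : S, ρ g D = D) → ∀ A ∈ M, D * A ∈ M := by
    intro D hD A hA
    rw [hM] at hA ⊢
    induction hA using Submodule.span_induction with
    | mem w hw =>
      apply Submodule.subset_span
      rcases hw with ⟨x, y, B, rfl⟩ | ⟨g, B, rfl⟩
      · left
        exact ⟨x, y, D * B, by
          rw [mul_sub, ← mul_assoc, ← mul_assoc, ← hcompat D hD x, mul_assoc (ξ x)]⟩
      · right
        exact ⟨g, D * B, by rw [mul_sub, map_mul, hD g]⟩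
    | zero => simp
    | add a b _ _ ha hb => rw [mul_add]; exact Submodule.add_mem _ ha hb
    | smul c a _ ha => rw [mul_smul_comm]; exact Submodule.smul_mem _ _ ha
  have keyR : ∀ D : W, (∀ g : S, ρ g D = D) → ∀ A ∈ M, A * D ∈ M := by
    intro D hD A hA
    rw [hM] at hA ⊢
    induction hA using Submodule.span_induction with
    | mem w hw =>
      apply Submodule.subset_span
      rcases hw with ⟨x, y, B, rfl⟩ | ⟨g, B, rfl⟩
      · left
        refine ⟨x, y, B * D, ?_⟩
        simp only [sub_mul, mul_assoc]
        rw [hcompat D hD y]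
      · right
        exact ⟨g, B * D, by rw [sub_mul, map_mul, hD g]⟩
    | zero => simp
    | add a b _ _ ha hb => rw [add_mul]; exact Submodule.add_mem _ ha hb
    | smul c a _ ha => rw [smul_mul_assoc]; exact Submodule.smul_mem _ _ ha
  refine ⟨?_, ?_, ?_⟩
  · -- ideal property
    intro D hD A hA
    obtain ⟨hAM, hAinv⟩ := hA
    have hD' := (hmem D).mp hD
    have hA' := (hmem A).mp hAinv
    refine ⟨⟨keyL D hD' A hAM, ?_⟩, ⟨keyR D hD' A hAM, ?_⟩⟩
    · exact (hmem _).mpr fun g => by rw [map_mul, hD' g, hA' g]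
    · exact (hmem _).mpr fun g => by rw [map_mul, hD' g, hA' g]
  · -- surjectivity
    intro wq
    obtain ⟨w, rfl⟩ := M.mkQ_surjective wq
    obtain ⟨U, _, hwU, hUinv⟩ := hlf w
    set K : Submodule ℂ W :=
      Submodule.span ℂ {v : W | ∃ u ∈ U, ∃ g : S, v = u - ρ g u} with hK
    have hρU : ∀ (g : S), ∀ u ∈ U, ρ g u ∈ U := fun g u hu =>
      hUinv g ⟨u, hu, rfl⟩
    have hKU : K ≤ U := by
      rw [hK, Submodule.span_le]
      rintro v ⟨u, hu, g, rfl⟩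
      exact U.sub_mem hu (hρU g u hu)
    have hKM : K ≤ M := by
      rw [hK, Submodule.span_le, hM]
      rintro v ⟨u, hu, g, rfl⟩
      exact Submodule.subset_span (Or.inr ⟨g, u, rfl⟩)
    have hgen : ∀ (u : W), u ∈ U → ∀ g : S, u - ρ g u ∈ K := fun u hu g =>
      Submodule.subset_span ⟨u, hu, g, rfl⟩
    have hKinv : ∀ g : S, K.map (ρ g).toLinearMap ≤ K := by
      intro g
      rintro v ⟨k, hk, rfl⟩
      induction hk using Submodule.span_induction with
      | mem v hv =>
        obtain ⟨u, hu, h, rfl⟩ := hv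
        have hmul : ρ (g * h) u = ρ g (ρ h u) := by rw [map_mul]; rfl
        have : (ρ g).toLinearMap (u - ρ h u)
            = (u - ρ (g * h) u) - (u - ρ g u) := by
          simp only [AlgEquiv.toLinearMap_apply, map_sub, hmul]
          abel
        rw [this]
        exact K.sub_mem (hgen u hu (g * h)) (hgen u hu g)
      | zero => simp
      | add a b _ _ ha hb => rw [map_add]; exact K.add_mem ha hb
      | smul c a _ ha => rw [map_smul]; exact K.smul_mem c ha
    obtain ⟨C, hcompl, hCinv⟩ := hcr K hKinv
    have : w ∈ K ⊔ C := by rw [hcompl.sup_eq_top]; trivial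
    obtain ⟨k, hkK, c, hcC, hkc⟩ := Submodule.mem_sup.mp this
    have hcU : c ∈ U := by
      have : c = w - k := by rw [← hkc]; abel
      rw [this]; exact U.sub_mem hwU (hKU hkK)
    have hcinv : ∀ g : S, ρ g c = c := by
      intro g
      have h1 : c - ρ g c ∈ K := hgen c hcU g
      have h2 : c - ρ g c ∈ C := C.sub_mem hcC (hCinv g ⟨c, hcC, rfl⟩)
      have h3 := hcompl.disjoint.le_bot ⟨h1, h2⟩
      rw [Submodule.mem_bot] at h3
      exact (sub_eq_zero.mp h3).symm
    refine ⟨⟨c, (hmem c).mpr hcinv⟩, ?_⟩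
    show M.mkQ c = M.mkQ w
    rw [Submodule.mkQ_apply, Submodule.mkQ_apply, Submodule.Quotient.eq]
    have : c - w = -k := by rw [← hkc]; abel
    rw [this]
    exact M.neg_mem (hKM hkK)
  · rw [LinearMap.ker_comp, Submodule.ker_mkQ]
end

section
/- Let V be a finite-dimensional complex vector space with a nondegenerate symmetric or symplectic bilinear form b, and let x be a nilpotent endomorphism of V lying in the Lie algebra of the symmetry group of b (i.e., b(xu, v) + b(u, xv) = 0). For each d ≥ 1 let V_d = image of x^d. Then the bilinear form b_d on V_d defined by b_d(x^d(u), x^d(v)) = b(u, x^d(v)) is well-defined and nondegenerate; moreover b_d is symmetric if b_{d−1} is symplectic and symplectic if b_{d−1} is symmetric. -/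
/-!
Skew-adjointness of `x` gives `b (x^d u) v = (-1)^d b u (x^d v)`. Hence `b u (x^d v)` vanishes
when `x^d u = 0`, so it descends to a form on `range x^d`, and a vector `x^d u` orthogonal to
`range x^d` is orthogonal to all of `V`. For the alternation, write `x^d = x^(d-1) ∘ x` and move
the extra `x` across `b`, at the cost of a sign:
`b_d(x^d u, x^d v) = -b_{d-1}(x^d u, x^(d-1) v)` while
`b_d(x^d v, x^d u) = b_{d-1}(x^(d-1) v, x^d u)`.
-/

namespace Module.End

variable {R M : Type*} [Semiring R] [AddCommMonoid M] [Module R M]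

theorem pow_succ_apply (x : Module.End R M) (n : ℕ) (u : M) :
    (x ^ (n + 1)) u = (x ^ n) (x u) := by
  rw [pow_succ, mul_apply]

theorem pow_succ_apply' (x : Module.End R M) (n : ℕ) (u : M) :
    (x ^ (n + 1)) u = x ((x ^ n) u) := by
  rw [pow_succ', mul_apply]

end Module.End

namespace LinearMap

variable {R M N : Type*} [CommRing R] [AddCommGroup M] [Module R M] [AddCommGroup N] [Module R N]

theorem ext_range₂ {M' : Type*} [AddCommGroup M'] [Module R M'] {f : M →ₗ[R] M'}
    {B B' : range f →ₗ[R] range f →ₗ[R] N}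
    (h : ∀ u v, B ⟨f u, mem_range_self f u⟩ ⟨f v, mem_range_self f v⟩ =
      B' ⟨f u, mem_range_self f u⟩ ⟨f v, mem_range_self f v⟩) :
    B = B' := by
  ext ⟨-, u, rfl⟩ ⟨-, v, rfl⟩
  exact h u v

theorem apply_pow_left_eq_neg_one_pow_smul {b : M →ₗ[R] M →ₗ[R] N} {x : Module.End R M}
    (hx : ∀ u v, b (x u) v + b u (x v) = 0) (k : ℕ) (u v : M) :
    b ((x ^ k) u) v = ((-1 : Rˣ) ^ k) • b u ((x ^ k) v) := by
  induction k generalizing u with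
  | zero => simp
  | succ k ih =>
    rw [Module.End.pow_succ_apply x k u, ih, eq_neg_of_add_eq_zero_left (hx u _),
      ← Module.End.pow_succ_apply', pow_succ (-1 : Rˣ), mul_smul, Units.neg_smul, one_smul]

/-- The form `(f u, f v) ↦ b u (f v)` on `range f`; the paper's `b_d` is `rangeForm b (x ^ d)`. -/
noncomputable def rangeForm (b : M →ₗ[R] M →ₗ[R] N) (f : Module.End R M)
    (hf : ∀ u, f u = 0 → ∀ v, b u (f v) = 0) : range f →ₗ[R] range f →ₗ[R] N :=
  (Submodule.liftQ (ker f) (b.compl₂ (range f).subtype) fun u hu => by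
      ext ⟨-, v, rfl⟩
      exact hf u hu v).comp
    f.quotKerEquivRange.symm.toLinearMap

@[simp]
theorem rangeForm_apply (b : M →ₗ[R] M →ₗ[R] N) (f : Module.End R M)
    (hf : ∀ u, f u = 0 → ∀ v, b u (f v) = 0) (u v : M) (hu : f u ∈ range f)
    (hv : f v ∈ range f) : rangeForm b f hf ⟨f u, hu⟩ ⟨f v, hv⟩ = b u (f v) := by
  simp only [rangeForm, coe_comp, LinearEquiv.coe_coe, Function.comp_apply,
    f.quotKerEquivRange_symm_apply_image u]
  rfl

theorem eq_rangeForm {b : M →ₗ[R] M →ₗ[R] N} {f : Module.End R M}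
    {hf : ∀ u, f u = 0 → ∀ v, b u (f v) = 0} {B : range f →ₗ[R] range f →ₗ[R] N}
    (hB : ∀ u v, B ⟨f u, mem_range_self f u⟩ ⟨f v, mem_range_self f v⟩ = b u (f v)) :
    B = rangeForm b f hf :=
  ext_range₂ fun u v => by rw [hB, rangeForm_apply]

section UnitAdjoint

variable {b : M →ₗ[R] M →ₗ[R] N} {f : Module.End R M} {ε : Rˣ}

theorem apply_map_eq_zero_of_map_eq_zero (hf : ∀ u v, b (f u) v = ε • b u (f v)) (u : M)
    (hu : f u = 0) (v : M) : b u (f v) = 0 := by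
  rw [← smul_eq_zero_iff_eq ε, ← hf, hu, map_zero, zero_apply]

theorem separatingLeft_rangeForm (hb : b.SeparatingLeft)
    (hf : ∀ u v, b (f u) v = ε • b u (f v))
    (hf₀ : ∀ u, f u = 0 → ∀ v, b u (f v) = 0) : (rangeForm b f hf₀).SeparatingLeft := by
  rintro ⟨-, u, rfl⟩ hu
  refine Subtype.ext (hb _ fun v => ?_)
  rw [hf, ← rangeForm_apply b f hf₀ u v (mem_range_self f u) (mem_range_self f v), hu,
    smul_zero]

end UnitAdjoint

theorem rangeForm_pow_succ_apply_comm {b : M →ₗ[R] M →ₗ[R] N} {x : Module.End R M}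
    (hx : ∀ u v, b (x u) v + b u (x v) = 0) (n : ℕ)
    (hn : ∀ u, (x ^ n) u = 0 → ∀ v, b u ((x ^ n) v) = 0)
    (hn₁ : ∀ u, (x ^ (n + 1)) u = 0 → ∀ v, b u ((x ^ (n + 1)) v) = 0) (ε : R)
    (hε : ∀ w w', rangeForm b (x ^ n) hn w w' = ε • rangeForm b (x ^ n) hn w' w)
    (w w' : range (x ^ (n + 1))) :
    rangeForm b (x ^ (n + 1)) hn₁ w w' = -ε • rangeForm b (x ^ (n + 1)) hn₁ w' w := by
  obtain ⟨-, u, rfl⟩ := w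
  obtain ⟨-, v, rfl⟩ := w'
  calc rangeForm b (x ^ (n + 1)) hn₁ ⟨_, mem_range_self _ u⟩ ⟨_, mem_range_self _ v⟩
      = -rangeForm b (x ^ n) hn ⟨(x ^ n) (x u), mem_range_self _ _⟩
          ⟨(x ^ n) v, mem_range_self _ _⟩ := by
        rw [rangeForm_apply, rangeForm_apply, Module.End.pow_succ_apply',
          eq_neg_of_add_eq_zero_left (hx u _), neg_neg]
    _ = -ε • rangeForm b (x ^ n) hn ⟨(x ^ n) v, mem_range_self _ _⟩
          ⟨(x ^ n) (x u), mem_range_self _ _⟩ := by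
        rw [hε, neg_smul]
    _ = -ε • rangeForm b (x ^ (n + 1)) hn₁ ⟨_, mem_range_self _ v⟩
          ⟨_, mem_range_self _ u⟩ := by
        rw [rangeForm_apply, rangeForm_apply, Module.End.pow_succ_apply]

end LinearMap

open LinearMap in
theorem induced_form_on_image_of_nilpotent_general
    (V : Type*) [AddCommGroup V] [Module ℂ V]
    (b : V →ₗ[ℂ] V →ₗ[ℂ] ℂ)
    (hb_nondeg : ∀ u : V, (∀ v : V, b u v = 0) → u = 0)
    (x : Module.End ℂ V)
    (hx_skew : ∀ u v : V, b (x u) v + b u (x v) = 0)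
    (d : ℕ) (hd : 1 ≤ d) :
    -- existence and uniqueness (well-definedness) of b_d
    (∃! bd : ↥(LinearMap.range (x ^ d)) →ₗ[ℂ] ↥(LinearMap.range (x ^ d)) →ₗ[ℂ] ℂ,
      ∀ u v : V,
        bd ⟨(x ^ d) u, LinearMap.mem_range_self _ u⟩ ⟨(x ^ d) v, LinearMap.mem_range_self _ v⟩
          = b u ((x ^ d) v)) ∧
    -- nondegeneracy and the symmetric/symplectic alternation, for b_d and b_{d-1}
    (∀ (bd : ↥(LinearMap.range (x ^ d)) →ₗ[ℂ] ↥(LinearMap.range (x ^ d)) →ₗ[ℂ] ℂ)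
       (bd' : ↥(LinearMap.range (x ^ (d - 1))) →ₗ[ℂ] ↥(LinearMap.range (x ^ (d - 1))) →ₗ[ℂ] ℂ),
      (∀ u v : V,
        bd ⟨(x ^ d) u, LinearMap.mem_range_self _ u⟩ ⟨(x ^ d) v, LinearMap.mem_range_self _ v⟩
          = b u ((x ^ d) v)) →
      (∀ u v : V,
        bd' ⟨(x ^ (d - 1)) u, LinearMap.mem_range_self _ u⟩
            ⟨(x ^ (d - 1)) v, LinearMap.mem_range_self _ v⟩ = b u ((x ^ (d - 1)) v)) →
      ((∀ w : ↥(LinearMap.range (x ^ d)), (∀ w' , bd w w' = 0) → w = 0) ∧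
       ((∀ w w', bd' w w' = - bd' w' w) → (∀ w w', bd w w' = bd w' w)) ∧
       ((∀ w w', bd' w w' = bd' w' w) → (∀ w w', bd w w' = - bd w' w)))) := by
  have hpow := apply_pow_left_eq_neg_one_pow_smul hx_skew
  have hwd := fun k => apply_map_eq_zero_of_map_eq_zero (hpow k)
  refine ⟨⟨rangeForm b (x ^ d) (hwd d), fun u v => rangeForm_apply ..,
    fun B hB => eq_rangeForm hB⟩, fun bd bd' hbd hbd' => ?_⟩
  obtain rfl : bd = rangeForm b _ (hwd d) := eq_rangeForm hbd
  obtain rfl : bd' = rangeForm b _ (hwd (d - 1)) := eq_rangeForm hbd'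
  -- `n + 1 - 1` and `n` are definitionally equal, so no rewriting of `d - 1` is needed
  obtain ⟨n, rfl⟩ : ∃ n, d = n + 1 := ⟨d - 1, by omega⟩
  refine ⟨separatingLeft_rangeForm hb_nondeg (hpow _) _, fun h w w' => ?_, fun h w w' => ?_⟩
  · simpa using rangeForm_pow_succ_apply_comm hx_skew n _ _ (-1) (by simpa using h) w w'
  · simpa using rangeForm_pow_succ_apply_comm hx_skew n _ _ 1 (by simpa using h) w w'

/-- Let `V` be a finite-dimensional complex vector space with a nondegenerate
symmetric or symplectic bilinear form `b`, and `x` a nilpotent endomorphism of `V` with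
`b(xu,v) + b(u,xv) = 0`.  For `d ≥ 1` let `V_d = range x^d`.  Then the bilinear form `b_d` on
`V_d` defined by `b_d(x^d u, x^d v) = b(u, x^d v)` is well-defined (it exists and is unique),
is nondegenerate, and `b_d` is symmetric if `b_{d-1}` is symplectic and symplectic (skew) if
`b_{d-1}` is symmetric. -/
theorem induced_form_on_image_of_nilpotent
    (V : Type*) [AddCommGroup V] [Module ℂ V] [FiniteDimensional ℂ V]
    (b : V →ₗ[ℂ] V →ₗ[ℂ] ℂ)
    (hb_nondeg : ∀ u : V, (∀ v : V, b u v = 0) → u = 0)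
    (hb_refl : (∀ u v : V, b u v = b v u) ∨ (∀ u v : V, b u v = - b v u))
    (x : Module.End ℂ V)
    (hx_nil : IsNilpotent x)
    (hx_skew : ∀ u v : V, b (x u) v + b u (x v) = 0)
    (d : ℕ) (hd : 1 ≤ d) :
    -- existence and uniqueness (well-definedness) of b_d
    (∃! bd : ↥(LinearMap.range (x ^ d)) →ₗ[ℂ] ↥(LinearMap.range (x ^ d)) →ₗ[ℂ] ℂ,
      ∀ u v : V,
        bd ⟨(x ^ d) u, LinearMap.mem_range_self _ u⟩ ⟨(x ^ d) v, LinearMap.mem_range_self _ v⟩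
          = b u ((x ^ d) v)) ∧
    -- nondegeneracy and the symmetric/symplectic alternation, for b_d and b_{d-1}
    (∀ (bd : ↥(LinearMap.range (x ^ d)) →ₗ[ℂ] ↥(LinearMap.range (x ^ d)) →ₗ[ℂ] ℂ)
       (bd' : ↥(LinearMap.range (x ^ (d - 1))) →ₗ[ℂ] ↥(LinearMap.range (x ^ (d - 1))) →ₗ[ℂ] ℂ),
      (∀ u v : V,
        bd ⟨(x ^ d) u, LinearMap.mem_range_self _ u⟩ ⟨(x ^ d) v, LinearMap.mem_range_self _ v⟩
          = b u ((x ^ d) v)) →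
      (∀ u v : V,
        bd' ⟨(x ^ (d - 1)) u, LinearMap.mem_range_self _ u⟩
            ⟨(x ^ (d - 1)) v, LinearMap.mem_range_self _ v⟩ = b u ((x ^ (d - 1)) v)) →
      ((∀ w : ↥(LinearMap.range (x ^ d)), (∀ w' , bd w w' = 0) → w = 0) ∧
       ((∀ w w', bd' w w' = - bd' w' w) → (∀ w w', bd w w' = bd w' w)) ∧
       ((∀ w w', bd' w w' = bd' w' w) → (∀ w w', bd w w' = - bd w' w)))) :=
  induced_form_on_image_of_nilpotent_general V b hb_nondeg x hx_skew d hd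
end
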